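/- Let {M₁, M₂} be a two-outcome POVM in dimension 2 with Matrix.trace M₁ ≤ Matrix.trace M₂, let φ ∈ ℂ² be a unit vector, and set p(x) = ⟪φ, M_x·φ⟫ for x = 1,2. Define K₁₁ = √M₁ · (outer product |φ⟩⟨φ|) · √M₁, K₂₁ = p(1)·𝟙 − K₁₁, K₁₂ = M₁ − K₁₁, and K₂₂ = p(2)·𝟙 − K₁₂. Then all four matrices K_{x,j} are positive semidefinite, K₁₁ + K₂₁ = p(1)·𝟙, K₁₂ + K₂₂ = p(2)·𝟙, K₁₁ + K₁₂ = M₁, K₂₁ + K₂₂ = M₂ (so K is a valid decomposition of {M₁,M₂}), and its objective at φ equals ⟪φ, K₁₁·φ⟫ + ⟪φ, K₂₂·φ⟫ = 1 − 2·p(1) + 2·⟪φ, √M₁·φ⟫². -/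

import Mathlib

open Matrix ComplexOrder

noncomputable section

/-- The square root of a positive semidefinite matrix (as defined in the older Mathlib). -/
noncomputable def Matrix.PosSemidef.sqrt {n : Type*} [Fintype n] [DecidableEq n]
    {A : Matrix n n ℂ} (hA : A.PosSemidef) : Matrix n n ℂ :=
  hA.isHermitian.eigenvectorUnitary.1 * diagonal ((↑) ∘ (√·) ∘ hA.isHermitian.eigenvalues) *
  (star hA.isHermitian.eigenvectorUnitary : Matrix n n ℂ)

/-- `K` is a valid decomposition of the POVM `M`. -/
def IsDecomp {m d : ℕ} (M : Fin m → Matrix (Fin d) (Fin d) ℂ)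
    (K : Fin m → Fin m → Matrix (Fin d) (Fin d) ℂ) : Prop :=
  (∀ x j, (K x j).PosSemidef) ∧
  (∀ j, (d : ℂ) • ∑ x, K x j = (∑ x, (K x j).trace) • (1 : Matrix (Fin d) (Fin d) ℂ)) ∧
  (∀ x, ∑ j, K x j = M x)

/-- Eve's objective for the decomposition `K` and the state `φ`:
`∑_j ⟪φ, (K j j) φ⟫`. -/
def objective {m d : ℕ} (K : Fin m → Fin m → Matrix (Fin d) (Fin d) ℂ)
    (φ : Fin d → ℂ) : ℝ :=
  ∑ j, (star φ ⬝ᵥ (K j j).mulVec φ).re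

/-! With `S = √M₁` and `P = |φ⟩⟨φ|` (outcome `x` is the index `x - 1` in Lean), the elements
`K₁₁ = S P S` and `K₁₂ = M₁ - K₁₁ = S (1 - P) S` are congruent to positive matrices. The other two
have the form `c • 1 - A` with `A ⪰ 0`, which is positive as soon as `tr A ≤ c`, because every
eigenvalue of a positive matrix is at most its trace. For `K₂₁` this holds with equality,
`tr K₁₁ = ⟪φ, S S φ⟫ = p(1)`; for `K₂₂` it amounts to `tr M₁ ≤ 1`, which follows from
`tr M₁ ≤ tr M₂` and `tr M₁ + tr M₂ = tr 1 = 2`. Finally `⟪φ, K₁₁ φ⟫ = ⟪φ, S φ⟫²`. -/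

namespace Matrix

section sqrt

open scoped MatrixOrder

variable {n : Type*} [Fintype n] [DecidableEq n] {A : Matrix n n ℂ}

theorem PosSemidef.sqrt_eq_cfcSqrt (hA : A.PosSemidef) : hA.sqrt = CFC.sqrt A := by
  rw [CFC.sqrt_eq_real_sqrt A hA.nonneg, cfcₙ_eq_cfc (hf0 := Real.sqrt_zero), hA.isHermitian.cfc_eq]
  rfl

theorem PosSemidef.posSemidef_sqrt (hA : A.PosSemidef) : hA.sqrt.PosSemidef := by
  rw [hA.sqrt_eq_cfcSqrt, ← nonneg_iff_posSemidef]
  exact CFC.sqrt_nonneg A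

theorem PosSemidef.sqrt_mul_sqrt (hA : A.PosSemidef) : hA.sqrt * hA.sqrt = A := by
  rw [hA.sqrt_eq_cfcSqrt, CFC.sqrt_mul_sqrt_self A hA.nonneg]

end sqrt

section CommRing

variable {R : Type*} [CommRing R] {n : Type*} [Fintype n]

theorem trace_mul_vecMulVec_mul (S : Matrix n n R) (v w : n → R) :
    (S * vecMulVec v w * S).trace = w ⬝ᵥ (S * S) *ᵥ v := by
  rw [trace_mul_cycle, mul_vecMulVec, trace_vecMulVec, dotProduct_comm]

theorem dotProduct_mul_vecMulVec_mul_mulVec (S : Matrix n n R) (u v w x : n → R) :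
    u ⬝ᵥ (S * vecMulVec v w * S) *ᵥ x = (u ⬝ᵥ S *ᵥ v) * (w ⬝ᵥ S *ᵥ x) := by
  rw [← mulVec_mulVec, ← mulVec_mulVec, vecMulVec_mulVec, op_smul_eq_smul, mulVec_smul,
    dotProduct_smul, smul_eq_mul, mul_comm]

end CommRing

variable {𝕜 : Type*} [RCLike 𝕜] {n : Type*} [Fintype n] [DecidableEq n]

theorem PosSemidef.posSemidef_trace_smul_one_sub {A : Matrix n n 𝕜} (hA : A.PosSemidef) :
    (A.trace • 1 - A).PosSemidef := by
  set U := hA.isHermitian.eigenvectorUnitary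
  set ev := hA.isHermitian.eigenvalues
  have hdiag :
      diagonal (fun i ↦ A.trace - ev i) = A.trace • 1 - diagonal (RCLike.ofReal ∘ ev) := by
    rw [smul_one_eq_diagonal, diagonal_sub]
    rfl
  have hconj : A.trace • 1 - A
      = (U : Matrix n n 𝕜) * diagonal (fun i ↦ A.trace - ev i) * (U : Matrix n n 𝕜)ᴴ := by
    rw [← star_eq_conjTranspose, ← Unitary.conjStarAlgAut_apply (S := 𝕜), hdiag, map_sub,
      map_smul, map_one, ← hA.isHermitian.spectral_theorem]
  have hgap (i : n) : 0 ≤ A.trace - ev i := by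
    rw [hA.isHermitian.trace_eq_sum_eigenvalues, ← Finset.sum_erase_add _ _ (Finset.mem_univ i),
      add_sub_cancel_right]
    exact Finset.sum_nonneg fun j _ ↦ RCLike.ofReal_nonneg.mpr (hA.eigenvalues_nonneg j)
  rw [hconj]
  exact (posSemidef_diagonal_iff.mpr hgap).mul_mul_conjTranspose_same _

theorem PosSemidef.posSemidef_smul_one_sub_of_trace_le {A : Matrix n n 𝕜} (hA : A.PosSemidef)
    {c : 𝕜} (hc : A.trace ≤ c) : (c • 1 - A).PosSemidef := by
  have hsplit : c • 1 - A = (c - A.trace) • (1 : Matrix n n 𝕜) + (A.trace • 1 - A) := by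
    rw [sub_smul]; abel
  rw [hsplit]
  exact (PosSemidef.one.smul (sub_nonneg.mpr hc)).add hA.posSemidef_trace_smul_one_sub

theorem PosSemidef.trace_le_card_div_two_of_add_eq_one {A B : Matrix n n 𝕜} (hA : A.PosSemidef)
    (hAB : A + B = 1) (hle : RCLike.re A.trace ≤ RCLike.re B.trace) :
    A.trace ≤ ((Fintype.card n / 2 : ℝ) : 𝕜) := by
  have hsum : RCLike.re A.trace + RCLike.re B.trace = Fintype.card n := by
    rw [← map_add, ← trace_add, hAB, trace_one, RCLike.natCast_re]
  refine RCLike.le_iff_re_im.mpr ⟨?_, ?_⟩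
  · rw [RCLike.ofReal_re]
    linarith
  · rw [(RCLike.nonneg_iff.mp hA.trace_nonneg).2, RCLike.ofReal_im]

theorem posSemidef_one_sub_vecMulVec {v : n → 𝕜} (hv : star v ⬝ᵥ v = 1) :
    (1 - vecMulVec v (star v)).PosSemidef := by
  have h := (posSemidef_vecMulVec_self_star v).posSemidef_smul_one_sub_of_trace_le
    (c := 1) (by rw [trace_vecMulVec, dotProduct_comm, hv])
  rwa [one_smul] at h

end Matrix

/-- The explicit square-root decomposition for a qubit two-outcome POVM: all four elements
are positive semidefinite, they satisfy the decomposition constraints, and the objective at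
`φ` equals `1 − 2 p(1) + 2 ⟪φ, √M₁ φ⟫²`. -/
theorem qubit_square_root_decomposition
    (M : Fin 2 → Matrix (Fin 2) (Fin 2) ℂ)
    (hpsd : ∀ x, (M x).PosSemidef) (hsum : ∑ x, M x = 1)
    (htr : (M 0).trace.re ≤ (M 1).trace.re)
    (φ : Fin 2 → ℂ) (hφ : star φ ⬝ᵥ φ = 1) :
    let p : Fin 2 → ℂ := fun x => star φ ⬝ᵥ (M x).mulVec φ
    let S : Matrix (Fin 2) (Fin 2) ℂ := (hpsd 0).sqrt
    let K11 : Matrix (Fin 2) (Fin 2) ℂ := S * vecMulVec φ (star φ) * S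
    let K21 : Matrix (Fin 2) (Fin 2) ℂ := p 0 • (1 : Matrix (Fin 2) (Fin 2) ℂ) - K11
    let K12 : Matrix (Fin 2) (Fin 2) ℂ := M 0 - K11
    let K22 : Matrix (Fin 2) (Fin 2) ℂ := p 1 • (1 : Matrix (Fin 2) (Fin 2) ℂ) - K12
    K11.PosSemidef ∧ K21.PosSemidef ∧ K12.PosSemidef ∧ K22.PosSemidef ∧
    K11 + K21 = p 0 • (1 : Matrix (Fin 2) (Fin 2) ℂ) ∧
    K12 + K22 = p 1 • (1 : Matrix (Fin 2) (Fin 2) ℂ) ∧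
    K11 + K12 = M 0 ∧ K21 + K22 = M 1 ∧
    (star φ ⬝ᵥ K11.mulVec φ).re + (star φ ⬝ᵥ K22.mulVec φ).re
      = 1 - 2 * (p 0).re + 2 * ((star φ ⬝ᵥ S.mulVec φ).re) ^ 2 := by
  intro p S K11 K21 K12 K22
  have hS : S.PosSemidef := (hpsd 0).posSemidef_sqrt
  have hSS : S * S = M 0 := (hpsd 0).sqrt_mul_sqrt
  have hM01 : M 0 + M 1 = 1 := by rwa [← Fin.sum_univ_two]
  have hp : p 0 + p 1 = 1 := by
    simp only [p, ← dotProduct_add, ← add_mulVec, hM01, one_mulVec, hφ]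
  have hK12 : K12 = S * (1 - vecMulVec φ (star φ)) * S := by
    simp only [K12, K11, Matrix.mul_sub, Matrix.sub_mul, Matrix.mul_one, hSS]
  have hK11psd : K11.PosSemidef := by
    simpa [hS.isHermitian.eq] using (posSemidef_vecMulVec_self_star φ).mul_mul_conjTranspose_same S
  have hK12psd : K12.PosSemidef := by
    simpa [hK12, hS.isHermitian.eq] using
      (posSemidef_one_sub_vecMulVec hφ).mul_mul_conjTranspose_same S
  have htrK11 : K11.trace = p 0 := by
    rw [trace_mul_vecMulVec_mul, hSS]
  have htrK12 : K12.trace ≤ p 1 := by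
    rw [trace_sub, htrK11, sub_le_iff_le_add, add_comm, hp]
    simpa using (hpsd 0).trace_le_card_div_two_of_add_eq_one hM01 htr
  set t := star φ ⬝ᵥ S *ᵥ φ
  have hK11φ : star φ ⬝ᵥ K11 *ᵥ φ = t * t := dotProduct_mul_vecMulVec_mul_mulVec _ _ _ _ _
  have hK22φ : star φ ⬝ᵥ K22 *ᵥ φ = p 1 - p 0 + t * t := by
    simp only [K22, K12, sub_mulVec, dotProduct_sub, smul_mulVec, one_mulVec, dotProduct_smul,
      hφ, hK11φ]
    ring
  refine ⟨hK11psd, hK11psd.posSemidef_smul_one_sub_of_trace_le htrK11.le, hK12psd,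
    hK12psd.posSemidef_smul_one_sub_of_trace_le htrK12, add_sub_cancel _ _, add_sub_cancel _ _,
    add_sub_cancel _ _, ?_, ?_⟩
  · linear_combination (norm := module) hp • (1 : Matrix (Fin 2) (Fin 2) ℂ) - hM01
  · have ht : t.im = 0 := (Complex.nonneg_iff.mp (hS.dotProduct_mulVec_nonneg φ)).2.symm
    have hpre := congrArg Complex.re hp
    simp only [hK11φ, hK22φ, Complex.add_re, Complex.sub_re, Complex.mul_re, Complex.one_re,
      ht] at hpre ⊢
    linarith
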